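/- arXiv:1602.01341 — 4 statements merged into one kernel-verified Lean document; each statement's English description precedes it below -/
import Mathlib

section
/- Let n ≥ 1 be an integer, let a, b ≥ 0 and p, q > 0. Then for every u : ℤⁿ → ℂ with ‖u‖_{a+p+q} < ∞ and every v : ℤⁿ → ℂ with ‖v‖_{b+p+q} < ∞ one has ‖u‖_{a+p} · ‖v‖_{b+q} ≤ ‖u‖_{a+p+q} · ‖v‖_b + ‖u‖_a · ‖v‖_{b+p+q}. -/
open scoped ENNReal

/-- `|i| := max_k |i_k|` for a multi-index `i ∈ ℤⁿ`. -/
def absIdx {n : ℕ} (i : Fin n → ℤ) : ℕ :=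
  Finset.univ.sup fun k => (i k).natAbs

/-- `⟨i⟩ := max(1, |i|)`. -/
noncomputable def wt {n : ℕ} (i : Fin n → ℤ) : ℝ := max 1 (absIdx i : ℝ)

/-- Sobolev norm `‖u‖_s := (Σ_i ⟨i⟩^{2s} |u_i|²)^{1/2}` (valued in `ℝ≥0∞`). -/
noncomputable def sobNorm {n : ℕ} (u : (Fin n → ℤ) → ℂ) (s : ℝ) : ℝ≥0∞ :=
  (∑' i : Fin n → ℤ, ENNReal.ofReal (wt i ^ (2 * s)) * (‖u i‖₊ : ℝ≥0∞) ^ 2) ^ (1/2 : ℝ)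

/-! The Sobolev norms are log-convex in `s`: Hölder's inequality for the weighted sums gives
`‖u‖_{θ s₁ + (1-θ) s₂} ≤ ‖u‖_{s₁}^θ ‖u‖_{s₂}^{1-θ}`. With `θ = q/(p+q)` one has
`a + p = θ a + (1-θ)(a+p+q)` and `b + q = (1-θ) b + θ (b+p+q)`, so the left-hand side is at most
`(‖u‖_a ‖v‖_{b+p+q})^θ (‖u‖_{a+p+q} ‖v‖_b)^{1-θ}`, and `A^θ B^{1-θ} ≤ A + B`. -/

namespace ENNReal

open MeasureTheory Measure in
theorem tsum_rpow_mul_rpow_le {α : Type*} (f g : α → ℝ≥0∞) {θ : ℝ} (hθ₀ : 0 ≤ θ) (hθ₁ : θ ≤ 1) :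
    ∑' a, f a ^ θ * g a ^ (1 - θ) ≤ (∑' a, f a) ^ θ * (∑' a, g a) ^ (1 - θ) := by
  let : MeasurableSpace α := ⊤
  have : MeasurableSingletonClass α := ⟨fun _ => trivial⟩
  simpa only [lintegral_count] using
    lintegral_mul_norm_pow_le (μ := (count : Measure α))
      measurable_from_top.aemeasurable measurable_from_top.aemeasurable hθ₀ (sub_nonneg.2 hθ₁)
      (add_sub_cancel θ 1)

theorem rpow_mul_rpow_one_sub_le_add (A B : ℝ≥0∞) {θ : ℝ} (hθ₀ : 0 ≤ θ) (hθ₁ : θ ≤ 1) :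
    A ^ θ * B ^ (1 - θ) ≤ A + B :=
  calc A ^ θ * B ^ (1 - θ) ≤ (A + B) ^ θ * (A + B) ^ (1 - θ) :=
        mul_le_mul' (rpow_le_rpow le_self_add hθ₀) (rpow_le_rpow le_add_self (sub_nonneg.2 hθ₁))
    _ = A + B := by rw [← rpow_add_of_nonneg _ _ hθ₀ (sub_nonneg.2 hθ₁), add_sub_cancel, rpow_one]

theorem rpow_convexComb_mul {x : ℝ≥0∞} (hx₀ : x ≠ 0) (hx : x ≠ ⊤)
    (c : ℝ≥0∞) (s t : ℝ) {θ : ℝ} (hθ₀ : 0 ≤ θ) (hθ₁ : θ ≤ 1) :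
    x ^ (θ * s + (1 - θ) * t) * c = (x ^ s * c) ^ θ * (x ^ t * c) ^ (1 - θ) := by
  rw [mul_rpow_of_nonneg _ _ hθ₀, mul_rpow_of_nonneg _ _ (sub_nonneg.2 hθ₁), ← rpow_mul,
    ← rpow_mul, mul_mul_mul_comm, ← rpow_add _ _ hx₀ hx,
    ← rpow_add_of_nonneg _ _ hθ₀ (sub_nonneg.2 hθ₁), add_sub_cancel, rpow_one, mul_comm s,
    mul_comm t]

end ENNReal

lemma wt_pos {n : ℕ} (i : Fin n → ℤ) : 0 < wt i :=
  one_pos.trans_le (le_max_left _ _)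

lemma sobNorm_eq_tsum_ofReal_rpow {n : ℕ} (u : (Fin n → ℤ) → ℂ) (s : ℝ) :
    sobNorm u s =
      (∑' i, ENNReal.ofReal (wt i) ^ (2 * s) * (‖u i‖₊ : ℝ≥0∞) ^ 2) ^ (1 / 2 : ℝ) := by
  simp only [sobNorm, ENNReal.ofReal_rpow_of_pos (wt_pos _)]

lemma sobNorm_interpolation {n : ℕ} (u : (Fin n → ℤ) → ℂ) (s₁ s₂ : ℝ) {θ : ℝ}
    (hθ₀ : 0 ≤ θ) (hθ₁ : θ ≤ 1) :
    sobNorm u (θ * s₁ + (1 - θ) * s₂) ≤ sobNorm u s₁ ^ θ * sobNorm u s₂ ^ (1 - θ) := by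
  have hsum : ∀ i : Fin n → ℤ, ENNReal.ofReal (wt i) ^ (2 * (θ * s₁ + (1 - θ) * s₂)) *
      (‖u i‖₊ : ℝ≥0∞) ^ 2 = (ENNReal.ofReal (wt i) ^ (2 * s₁) * (‖u i‖₊ : ℝ≥0∞) ^ 2) ^ θ *
        (ENNReal.ofReal (wt i) ^ (2 * s₂) * (‖u i‖₊ : ℝ≥0∞) ^ 2) ^ (1 - θ) := fun i => by
    rw [← ENNReal.rpow_convexComb_mul
      (ENNReal.ofReal_pos.2 (wt_pos i)).ne' ENNReal.ofReal_ne_top _ _ _ hθ₀ hθ₁]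
    ring_nf
  simp only [sobNorm_eq_tsum_ofReal_rpow]
  rw [tsum_congr hsum, ← ENNReal.rpow_mul, ← ENNReal.rpow_mul,
    mul_comm (1 / 2 : ℝ), mul_comm (1 / 2 : ℝ), ENNReal.rpow_mul, ENNReal.rpow_mul _ (1 - θ),
    ← ENNReal.mul_rpow_of_nonneg _ _ (by norm_num)]
  exact ENNReal.rpow_le_rpow (ENNReal.tsum_rpow_mul_rpow_le _ _ hθ₀ hθ₁) (by norm_num)

theorem stmt2_general (n : ℕ) (a b p q : ℝ)
    (hp : 0 < p) (hq : 0 < q)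
    (u v : (Fin n → ℤ) → ℂ) :
    sobNorm u (a + p) * sobNorm v (b + q) ≤
      sobNorm u (a + p + q) * sobNorm v b + sobNorm u a * sobNorm v (b + p + q) := by
  set θ := q / (p + q)
  have hθ₀ : 0 ≤ θ := by positivity
  have hθ₁ : θ ≤ 1 := div_le_one_of_le₀ (by linarith) (by positivity)
  have hu : sobNorm u (a + p) ≤ sobNorm u a ^ θ * sobNorm u (a + p + q) ^ (1 - θ) := by
    convert sobNorm_interpolation u a (a + p + q) hθ₀ hθ₁ using 2
    simp only [θ]; field_simp; ring
  have hv : sobNorm v (b + q) ≤ sobNorm v (b + p + q) ^ θ * sobNorm v b ^ (1 - θ) := by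
    convert sobNorm_interpolation v (b + p + q) b hθ₀ hθ₁ using 2
    simp only [θ]; field_simp; ring
  calc sobNorm u (a + p) * sobNorm v (b + q)
      ≤ (sobNorm u a * sobNorm v (b + p + q)) ^ θ *
          (sobNorm u (a + p + q) * sobNorm v b) ^ (1 - θ) := by
        rw [ENNReal.mul_rpow_of_nonneg _ _ hθ₀, ENNReal.mul_rpow_of_nonneg _ _ (sub_nonneg.2 hθ₁),
          mul_mul_mul_comm]
        exact mul_le_mul' hu hv
    _ ≤ _ := (ENNReal.rpow_mul_rpow_one_sub_le_add _ _ hθ₀ hθ₁).trans_eq (add_comm _ _)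

theorem stmt2 (n : ℕ) (hn : 1 ≤ n) (a b p q : ℝ)
    (ha : 0 ≤ a) (hb : 0 ≤ b) (hp : 0 < p) (hq : 0 < q)
    (u v : (Fin n → ℤ) → ℂ)
    (hu : sobNorm u (a + p + q) < ⊤) (hv : sobNorm v (b + p + q) < ⊤) :
    sobNorm u (a + p) * sobNorm v (b + q) ≤
      sobNorm u (a + p + q) * sobNorm v b + sobNorm u a * sobNorm v (b + p + q) :=
  stmt2_general n a b p q hp hq u v
end

section
/- Let n ≥ 1 and let A, B be n × n Hermitian (self-adjoint) complex matrices, with eigenvalues λ₁,…,λ_n of A and β₁,…,β_n of B. Assume δ := min_{i,j=1,…,n} |λ_j − β_i| > 0. Then there exists a constant K > 0 depending only on n such that for every n × n complex matrix R, the Sylvester equation AC − CB = R has a unique solution C, and this solution satisfies ‖C‖_∞ ≤ K δ^{−1} ‖R‖_∞. -/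
/-- `‖M‖_∞`: the maximum of the absolute values of the entries of a finite matrix. -/
noncomputable def entrywiseSup {n : ℕ} (M : Matrix (Fin n) (Fin n) ℂ) : ℝ :=
  ⨆ i : Fin n, ⨆ j : Fin n, ‖M i j‖

/-!
Diagonalise `A = U diag(λ) U*` and `B = V diag(β) V*` with unitary `U`, `V`. In these bases the
Sylvester operator `C ↦ A C - C B` becomes entrywise multiplication of `U* C V` by `λ_i - β_j`, so
it is invertible as soon as `δ > 0`, and inverting it costs at most a factor `δ⁻¹` in the entrywise
sup norm. Unitary matrices have entries of modulus at most `1`, so each change of basis costs at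
most a factor `n²` in that norm, whence `K = n⁴`.
-/

open scoped Matrix.Norms.Elementwise

namespace Matrix

section EntrywiseNorm

variable {α : Type*} [NonUnitalSeminormedRing α] {l m n : Type*} [Fintype l] [Fintype m]
  [Fintype n]

theorem norm_mul_le_card_mul (A : Matrix l m α) (B : Matrix m n α) :
    ‖A * B‖ ≤ Fintype.card m * (‖A‖ * ‖B‖) := by
  refine (norm_le_iff (by positivity)).2 fun i j => ?_
  calc ‖(A * B) i j‖ ≤ ∑ k, ‖A i k‖ * ‖B k j‖ :=
        (norm_sum_le _ _).trans (Finset.sum_le_sum fun k _ => norm_mul_le _ _)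
    _ ≤ ∑ _k : m, ‖A‖ * ‖B‖ := by
        gcongr with k
        · exact norm_entry_le_entrywise_sup_norm A
        · exact norm_entry_le_entrywise_sup_norm B
    _ = Fintype.card m * (‖A‖ * ‖B‖) := by simp

end EntrywiseNorm

theorem mul_star_mul_mul_mul_star_of_mem_unitaryGroup {α : Type*} [CommRing α] [StarRing α]
    {m n : Type*} [Fintype m] [Fintype n] [DecidableEq m] [DecidableEq n] {U : Matrix m m α}
    {V : Matrix n n α} (hU : U ∈ unitaryGroup m α) (hV : V ∈ unitaryGroup n α)
    (C : Matrix m n α) : U * (star U * C * V) * star V = C := by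
  simp only [← Matrix.mul_assoc, Unitary.mul_star_self_of_mem hU, Matrix.one_mul]
  rw [Matrix.mul_assoc, Unitary.mul_star_self_of_mem hV, Matrix.mul_one]

theorem norm_mul_mul_le_of_mem_unitaryGroup {𝕜 : Type*} [RCLike 𝕜] {m n : Type*} [Fintype m]
    [Fintype n] [DecidableEq m] [DecidableEq n] {U : Matrix m m 𝕜} {V : Matrix n n 𝕜}
    (hU : U ∈ unitaryGroup m 𝕜) (hV : V ∈ unitaryGroup n 𝕜) (X : Matrix m n 𝕜) :
    ‖U * X * V‖ ≤ Fintype.card m * Fintype.card n * ‖X‖ := by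
  have hU1 := entrywise_sup_norm_bound_of_unitary hU
  have hV1 := entrywise_sup_norm_bound_of_unitary hV
  calc ‖U * X * V‖ ≤ Fintype.card n * (Fintype.card m * (‖U‖ * ‖X‖) * ‖V‖) := by
        grw [norm_mul_le_card_mul (U * X), norm_mul_le_card_mul U]
    _ ≤ Fintype.card n * (Fintype.card m * (1 * ‖X‖) * 1) := by gcongr
    _ = Fintype.card m * Fintype.card n * ‖X‖ := by ring

section Sylvester

variable {α : Type*} {m n : Type*} [Fintype m] [Fintype n]

def sylvesterMap [CommRing α] (A : Matrix m m α) (B : Matrix n n α) :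
    Matrix m n α →ₗ[α] Matrix m n α :=
  mulLeftLinearMap n α A - mulRightLinearMap m α B

@[simp]
theorem sylvesterMap_apply [CommRing α] (A : Matrix m m α) (B : Matrix n n α)
    (C : Matrix m n α) : sylvesterMap A B C = A * C - C * B :=
  rfl

variable [DecidableEq m] [DecidableEq n] {A : Matrix m m α} {B : Matrix n n α}
  {U : Matrix m m α} {V : Matrix n n α} {a : m → α} {b : n → α}

theorem star_mul_sylvesterMap_mul_apply [CommRing α] [StarRing α] (hU : U ∈ unitaryGroup m α)
    (hV : V ∈ unitaryGroup n α) (hUA : star U * A * U = diagonal a)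
    (hVB : star V * B * V = diagonal b) (C : Matrix m n α) (i : m) (j : n) :
    (star U * sylvesterMap A B C * V) i j = (a i - b j) * (star U * C * V) i j := by
  have hconj : star U * sylvesterMap A B C * V =
      (star U * A * U) * (star U * C * V) - (star U * C * V) * (star V * B * V) := by
    calc star U * sylvesterMap A B C * V
        = star U * A * (U * star U) * C * V - star U * C * (V * star V) * B * V := by
          simp only [sylvesterMap_apply, Unitary.mul_star_self_of_mem hU,
            Unitary.mul_star_self_of_mem hV, Matrix.mul_sub, Matrix.sub_mul, Matrix.mul_one,
            Matrix.mul_assoc]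
      _ = _ := by simp only [Matrix.mul_assoc]
  rw [hconj, hUA, hVB, sub_apply, diagonal_mul, mul_diagonal]
  ring

theorem sylvesterMap_bijective [Field α] [StarRing α] (hU : U ∈ unitaryGroup m α)
    (hV : V ∈ unitaryGroup n α) (hUA : star U * A * U = diagonal a)
    (hVB : star V * B * V = diagonal b) (hab : ∀ i j, a i ≠ b j) :
    Function.Bijective (sylvesterMap A B) := by
  have hinj : Function.Injective (sylvesterMap A B) := by
    refine (injective_iff_map_eq_zero _).2 fun C hC => ?_
    have hX : star U * C * V = 0 := by
      ext i j
      have hij := star_mul_sylvesterMap_mul_apply hU hV hUA hVB C i j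
      rw [hC, Matrix.mul_zero, Matrix.zero_mul, zero_apply, eq_comm,
        mul_eq_zero_iff_left (sub_ne_zero.2 (hab i j))] at hij
      exact hij
    rw [← mul_star_mul_mul_mul_star_of_mem_unitaryGroup hU hV C, hX, Matrix.mul_zero,
      Matrix.zero_mul]
  exact ⟨hinj, LinearMap.injective_iff_surjective.1 hinj⟩

theorem norm_le_of_sylvesterMap_eq [RCLike α] (hU : U ∈ unitaryGroup m α)
    (hV : V ∈ unitaryGroup n α) (hUA : star U * A * U = diagonal a)
    (hVB : star V * B * V = diagonal b) {δ : ℝ} (hδ : 0 < δ) (hgap : ∀ i j, δ ≤ ‖a i - b j‖)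
    {C R : Matrix m n α} (hC : sylvesterMap A B C = R) :
    ‖C‖ ≤ (Fintype.card m * Fintype.card n) ^ 2 * δ⁻¹ * ‖R‖ := by
  set X := star U * C * V
  have hX : ‖X‖ ≤ δ⁻¹ * ‖star U * R * V‖ := by
    refine (norm_le_iff (by positivity)).2 fun i j => (le_inv_mul_iff₀ hδ).2 ?_
    calc δ * ‖X i j‖ ≤ ‖a i - b j‖ * ‖X i j‖ := by gcongr; exact hgap i j
      _ = ‖(star U * R * V) i j‖ := by
        rw [← hC, star_mul_sylvesterMap_mul_apply hU hV hUA hVB, norm_mul]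
      _ ≤ ‖star U * R * V‖ := norm_entry_le_entrywise_sup_norm _
  calc ‖C‖ = ‖U * X * star V‖ := by
        rw [mul_star_mul_mul_mul_star_of_mem_unitaryGroup hU hV]
    _ ≤ Fintype.card m * Fintype.card n * ‖X‖ :=
        norm_mul_mul_le_of_mem_unitaryGroup hU (Unitary.star_mem hV) X
    _ ≤ Fintype.card m * Fintype.card n * (δ⁻¹ * (Fintype.card m * Fintype.card n * ‖R‖)) := by
        grw [hX, norm_mul_mul_le_of_mem_unitaryGroup (Unitary.star_mem hU) hV R]
    _ = (Fintype.card m * Fintype.card n) ^ 2 * δ⁻¹ * ‖R‖ := by ring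

end Sylvester

theorem IsHermitian.star_eigenvectorUnitary_mul_self_mul_eigenvectorUnitary {𝕜 : Type*}
    [RCLike 𝕜] {n : Type*} [Fintype n] [DecidableEq n] {A : Matrix n n 𝕜} (hA : A.IsHermitian) :
    star (hA.eigenvectorUnitary : Matrix n n 𝕜) * A * (hA.eigenvectorUnitary : Matrix n n 𝕜) =
      diagonal (RCLike.ofReal ∘ hA.eigenvalues) := by
  simpa [Unitary.conjStarAlgAut_star_apply] using hA.conjStarAlgAut_star_eigenvectorUnitary

end Matrix

theorem entrywiseSup_eq_norm {n : ℕ} (M : Matrix (Fin n) (Fin n) ℂ) : entrywiseSup M = ‖M‖ := by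
  have hsup : 0 ≤ entrywiseSup M :=
    Real.iSup_nonneg fun i => Real.iSup_nonneg fun j => norm_nonneg _
  refine le_antisymm ?_ ((Matrix.norm_le_iff hsup).2 fun i j => ?_)
  · exact Real.iSup_le (fun i => Real.iSup_le (fun j => Matrix.norm_entry_le_entrywise_sup_norm M)
      (norm_nonneg _)) (norm_nonneg _)
  · exact (le_ciSup (Finite.bddAbove_range _) j).trans
      (le_ciSup (Finite.bddAbove_range fun i => ⨆ j, ‖M i j‖) i)

theorem stmt12 (n : ℕ) (hn : 1 ≤ n) :
    ∃ K : ℝ, 0 < K ∧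
      ∀ (A B : Matrix (Fin n) (Fin n) ℂ) (hA : A.IsHermitian) (hB : B.IsHermitian),
        0 < ⨅ p : Fin n × Fin n, |hA.eigenvalues p.2 - hB.eigenvalues p.1| →
        ∀ R : Matrix (Fin n) (Fin n) ℂ,
          (∃! C : Matrix (Fin n) (Fin n) ℂ, A * C - C * B = R) ∧
          ∀ C : Matrix (Fin n) (Fin n) ℂ, A * C - C * B = R →
            entrywiseSup C ≤
              K * (⨅ p : Fin n × Fin n, |hA.eigenvalues p.2 - hB.eigenvalues p.1|)⁻¹ *
                entrywiseSup R := by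
  refine ⟨(n : ℝ) ^ 4, by positivity, fun A B hA hB hδ R => ?_⟩
  set δ := ⨅ p : Fin n × Fin n, |hA.eigenvalues p.2 - hB.eigenvalues p.1|
  have hgap : ∀ i j, δ ≤ ‖(hA.eigenvalues i : ℂ) - hB.eigenvalues j‖ := fun i j => by
    rw [← Complex.ofReal_sub, Complex.norm_real, Real.norm_eq_abs]
    exact ciInf_le (Finite.bddBelow_range _) (j, i)
  have hU := hA.eigenvectorUnitary.2
  have hV := hB.eigenvectorUnitary.2
  have hUA := hA.star_eigenvectorUnitary_mul_self_mul_eigenvectorUnitary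
  have hVB := hB.star_eigenvectorUnitary_mul_self_mul_eigenvectorUnitary
  have hab : ∀ i j, (hA.eigenvalues i : ℂ) ≠ hB.eigenvalues j := fun i j h => by
    simpa [h] using hδ.trans_le (hgap i j)
  refine ⟨(Matrix.sylvesterMap_bijective hU hV hUA hVB hab).existsUnique R, fun C hC => ?_⟩
  simpa [entrywiseSup_eq_norm, ← sq, ← pow_mul] using
    Matrix.norm_le_of_sylvesterMap_eq hU hV hUA hVB hδ hgap hC
end

section
/- Let a : ℝ → ℝ be a continuous 2π-periodic function with 1 + a(x) > 0 for all x. Define m := ((1/(2π)) ∫₀^{2π} (1 + a(x))^{−1/2} dx)^{−2} − 1 and ρ(x) := (1 + m)^{1/2} (1 + a(x))^{−1/2} − 1. Then: (i) ∫₀^{2π} ρ(x) dx = 0, so that ρ admits a 2π-periodic primitive ξ; and (ii) (1 + a(x))(1 + ρ(x))² = 1 + m for all x ∈ ℝ, i.e. any ξ with ξ' = ρ satisfies (1 + a)(1 + ξ')² = 1 + m identically, with m independent of x. -/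
/-!
Solving `(1 + a)(1 + ρ)² = 1 + m` pointwise forces `ρ = √(1 + m) / √(1 + a) - 1`. A periodic
primitive of `ρ` exists exactly when `ρ` has mean zero, and that condition pins down
`√(1 + m) = 2π / ∫₀^{2π} (1 + a)^{-1/2}`, which is the stated value of `m`.
-/

open intervalIntegral Function

theorem Continuous.exists_periodic_hasDerivAt_of_integral_eq_zero {f : ℝ → ℝ} {T : ℝ}
    (hf : Continuous f) (hper : Periodic f T) (h₀ : ∫ x in 0..T, f x = 0) :
    ∃ F : ℝ → ℝ, (∀ x, HasDerivAt F (f x) x) ∧ Periodic F T := by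
  refine ⟨fun t => ∫ x in 0..t, f x, fun x => (hf.integral_hasStrictDerivAt 0 x).hasDerivAt,
    fun t => ?_⟩
  have := hper.intervalIntegral_add_eq_add 0 t fun _ _ => hf.intervalIntegrable _ _
  rwa [zero_add, h₀, add_zero] at this

theorem integral_length_div_integral_mul_sub_one {g : ℝ → ℝ} {a b : ℝ}
    (hg : IntervalIntegrable g MeasureTheory.volume a b) (h : ∫ x in a..b, g x ≠ 0) :
    ∫ x in a..b, ((b - a) / (∫ x in a..b, g x) * g x - 1) = 0 := by
  rw [integral_sub (hg.const_mul _) intervalIntegrable_const, integral_const_mul,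
    integral_const, div_mul_cancel₀ _ h, smul_eq_mul, mul_one, sub_self]

theorem Real.mul_sq_sqrt_mul_inv_sqrt {u v : ℝ} (hu : 0 ≤ u) (hv : 0 < v) :
    v * (√u * (√v)⁻¹) ^ 2 = u := by
  rw [mul_pow, inv_pow, Real.sq_sqrt hu, Real.sq_sqrt hv.le, mul_comm u,
    mul_inv_cancel_left₀ hv.ne']

theorem stmt16 (a : ℝ → ℝ) (ha : Continuous a)
    (haper : ∀ x, a (x + 2 * Real.pi) = a x) (hpos : ∀ x, 0 < 1 + a x) :
    let m : ℝ :=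
      (((1 / (2 * Real.pi)) *
          ∫ x in (0 : ℝ)..(2 * Real.pi), (Real.sqrt (1 + a x))⁻¹) ^ 2)⁻¹ - 1
    let ρ : ℝ → ℝ := fun x => Real.sqrt (1 + m) * (Real.sqrt (1 + a x))⁻¹ - 1
    (∫ x in (0 : ℝ)..(2 * Real.pi), ρ x) = 0 ∧
    (∃ ξ : ℝ → ℝ, (∀ x, HasDerivAt ξ (ρ x) x) ∧ ∀ x, ξ (x + 2 * Real.pi) = ξ x) ∧
    ∀ x, (1 + a x) * (1 + ρ x) ^ 2 = 1 + m := by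
  intro m ρ
  set g : ℝ → ℝ := fun x => (√(1 + a x))⁻¹
  set c := ∫ x in (0 : ℝ)..(2 * Real.pi), g x
  have hg : Continuous g :=
    ((continuous_const.add ha).sqrt).inv₀ fun x => (Real.sqrt_pos.2 (hpos x)).ne'
  have hc : 0 < c := intervalIntegral_pos_of_pos (hg.intervalIntegrable _ _)
    (fun x => inv_pos.2 (Real.sqrt_pos.2 (hpos x))) Real.two_pi_pos
  have hm : 1 + m = ((1 / (2 * Real.pi) * c) ^ 2)⁻¹ := add_sub_cancel _ _
  have hsqrt : √(1 + m) = 2 * Real.pi / c := by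
    rw [hm, Real.sqrt_inv, Real.sqrt_sq (by positivity), mul_comm, ← div_eq_mul_one_div,
      inv_div]
  have hρ : ρ = fun x => 2 * Real.pi / c * g x - 1 := by
    simp only [ρ, hsqrt, g]
  have hρ_int : ∫ x in (0 : ℝ)..(2 * Real.pi), ρ x = 0 := by
    simpa only [hρ, sub_zero] using
      integral_length_div_integral_mul_sub_one (hg.intervalIntegrable 0 (2 * Real.pi)) hc.ne'
  have hρ_per : Periodic ρ (2 * Real.pi) := fun x => by simp only [ρ, haper x]
  have hρ_cont : Continuous ρ := hρ ▸ (continuous_const.mul hg).sub continuous_const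
  refine ⟨hρ_int, hρ_cont.exists_periodic_hasDerivAt_of_integral_eq_zero hρ_per hρ_int,
    fun x => ?_⟩
  rw [add_sub_cancel]
  exact Real.mul_sq_sqrt_mul_inv_sqrt (hm ▸ by positivity) (hpos x)
end

section
/- Let n ≥ 1, s₀ ≥ 0, and τ₁, τ₂, μ₁, μ₂ ≥ 0, and set τ := max(τ₁, τ₂), μ := max(μ₁, μ₂). Let 𝒮 be the space of sequences h : ℤⁿ → ℂ with ‖h‖_s < ∞ for every s ≥ 0, let u ∈ 𝒮, and let Q₁, Q₂ : 𝒮 → 𝒮 be linear maps such that for i = 1, 2 and every s ≥ s₀ there is a constant C_i(s) > 0 with ‖Q_i h‖_s ≤ C_i(s)(‖h‖_{s+τ_i} + ‖u‖_{s+μ_i} ‖h‖_{s₀+τ_i}) for all h ∈ 𝒮. If ‖u‖_{s₀+τ+μ} ≤ 1, then for every s ≥ s₀ there is a constant C(s) > 0 (depending only on C₁ and C₂ evaluated at finitely many indices) such that the composition Q := Q₁ ∘ Q₂ satisfies ‖Q h‖_s ≤ C(s)(‖h‖_{s+τ₁+τ₂} + ‖u‖_{s+τ+μ} ‖h‖_{s₀+τ₁+τ₂})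 for all h ∈ 𝒮. -/
/-! The estimate for `Q₁ ∘ Q₂` is obtained by applying the tame estimate of `Q₁` to `Q₂ h` and
then that of `Q₂` twice: at the high index `s + τ₁`, where monotonicity of `‖·‖_s` in `s` lets
every term be dominated by the target quantities, and at the low index `s₀ + τ₁`, where the
smallness `‖u‖_{s₀+τ+μ} ≤ 1` turns the tame estimate into a plain bound
`‖Q₂ h‖_{s₀+τ₁} ≤ 2 C₂ ‖h‖_{s₀+τ₁+τ₂}`. -/

open scoped ENNReal

lemma sobNorm_mono {n : ℕ} (u : (Fin n → ℤ) → ℂ) {t t' : ℝ} (h : t ≤ t') :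
    sobNorm u t ≤ sobNorm u t' := by
  unfold sobNorm
  refine ENNReal.rpow_le_rpow ?_ (by norm_num)
  refine ENNReal.tsum_le_tsum fun i => ?_
  refine mul_le_mul_left (ENNReal.ofReal_le_ofReal ?_) _
  exact Real.rpow_le_rpow_of_exponent_le (le_max_left 1 _) (by linarith)

lemma mul_add_mul_mul_le_add_mul (a b x y z : ℝ≥0∞) :
    a * (x + y * z) + y * (b * z) ≤ (a + b) * (x + y * z) := by
  rw [add_mul]
  refine add_le_add le_rfl ?_
  calc y * (b * z) = b * (y * z) := by ring
    _ ≤ b * (x + y * z) := by gcongr; exact le_add_self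

section TameEstimate

variable {n : ℕ}

/-- Membership in the space `𝒮`. -/
def IsSmooth (h : (Fin n → ℤ) → ℂ) : Prop := ∀ t : ℝ, 0 ≤ t → sobNorm h t < ⊤

def TameEstimate (Q : ((Fin n → ℤ) → ℂ) →ₗ[ℂ] ((Fin n → ℤ) → ℂ)) (u : (Fin n → ℤ) → ℂ)
    (s₀ τ μ : ℝ) (C : ℝ → ℝ) : Prop :=
  ∀ s, s₀ ≤ s → ∀ h, IsSmooth h →
    sobNorm (Q h) s ≤
      ENNReal.ofReal (C s) * (sobNorm h (s + τ) + sobNorm u (s + μ) * sobNorm h (s₀ + τ))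

variable {Q : ((Fin n → ℤ) → ℂ) →ₗ[ℂ] ((Fin n → ℤ) → ℂ)} {u h : (Fin n → ℤ) → ℂ}
  {s₀ τ μ σ : ℝ} {C : ℝ → ℝ}

lemma TameEstimate.le_of_le (hQ : TameEstimate Q u s₀ τ μ C) (hσ : s₀ ≤ σ) (hh : IsSmooth h)
    {t t' : ℝ} (ht : σ + μ ≤ t) (ht' : s₀ + τ ≤ t') :
    sobNorm (Q h) σ ≤ ENNReal.ofReal (C σ) * (sobNorm h (σ + τ) + sobNorm u t * sobNorm h t') := by
  refine (hQ σ hσ h hh).trans ?_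
  gcongr
  · exact sobNorm_mono u ht
  · exact sobNorm_mono h ht'

lemma TameEstimate.le_of_small (hQ : TameEstimate Q u s₀ τ μ C) (hσ : s₀ ≤ σ) (hh : IsSmooth h)
    (hu : sobNorm u (σ + μ) ≤ 1) :
    sobNorm (Q h) σ ≤ 2 * ENNReal.ofReal (C σ) * sobNorm h (σ + τ) :=
  calc sobNorm (Q h) σ
      ≤ ENNReal.ofReal (C σ) * (sobNorm h (σ + τ) + sobNorm u (σ + μ) * sobNorm h (s₀ + τ)) :=
        hQ σ hσ h hh
    _ ≤ ENNReal.ofReal (C σ) * (sobNorm h (σ + τ) + 1 * sobNorm h (σ + τ)) := by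
        gcongr
        exact sobNorm_mono h (by linarith)
    _ = 2 * ENNReal.ofReal (C σ) * sobNorm h (σ + τ) := by ring

end TameEstimate

theorem stmt18_general (n : ℕ) (s₀ τ₁ τ₂ μ₁ μ₂ : ℝ)
    (hτ₁ : 0 ≤ τ₁)
    (u : (Fin n → ℤ) → ℂ)
    (Q₁ Q₂ : ((Fin n → ℤ) → ℂ) →ₗ[ℂ] ((Fin n → ℤ) → ℂ))
    (hQmem₂ : ∀ h : (Fin n → ℤ) → ℂ, (∀ t : ℝ, 0 ≤ t → sobNorm h t < ⊤) →
      ∀ t : ℝ, 0 ≤ t → sobNorm (Q₂ h) t < ⊤)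
    (C₁ C₂ : ℝ → ℝ)
    (hC₁ : ∀ s, s₀ ≤ s → 0 < C₁ s) (hC₂ : ∀ s, s₀ ≤ s → 0 < C₂ s)
    (hQ₁ : ∀ s, s₀ ≤ s → ∀ h : (Fin n → ℤ) → ℂ, (∀ t : ℝ, 0 ≤ t → sobNorm h t < ⊤) →
      sobNorm (Q₁ h) s ≤ ENNReal.ofReal (C₁ s) *
        (sobNorm h (s + τ₁) + sobNorm u (s + μ₁) * sobNorm h (s₀ + τ₁)))
    (hQ₂ : ∀ s, s₀ ≤ s → ∀ h : (Fin n → ℤ) → ℂ, (∀ t : ℝ, 0 ≤ t → sobNorm h t < ⊤) →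
      sobNorm (Q₂ h) s ≤ ENNReal.ofReal (C₂ s) *
        (sobNorm h (s + τ₂) + sobNorm u (s + μ₂) * sobNorm h (s₀ + τ₂)))
    (husmall : sobNorm u (s₀ + max τ₁ τ₂ + max μ₁ μ₂) ≤ 1) :
    ∀ s, s₀ ≤ s → ∃ C : ℝ, 0 < C ∧
      ∀ h : (Fin n → ℤ) → ℂ, (∀ t : ℝ, 0 ≤ t → sobNorm h t < ⊤) →
        sobNorm (Q₁ (Q₂ h)) s ≤ ENNReal.ofReal C *
          (sobNorm h (s + τ₁ + τ₂) +
            sobNorm u (s + max τ₁ τ₂ + max μ₁ μ₂) * sobNorm h (s₀ + τ₁ + τ₂)) := by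
  intro s hs
  have hτ : τ₁ ≤ max τ₁ τ₂ ∧ τ₂ ≤ max τ₁ τ₂ := ⟨le_max_left _ _, le_max_right _ _⟩
  have hμ : μ₁ ≤ max μ₁ μ₂ ∧ μ₂ ≤ max μ₁ μ₂ := ⟨le_max_left _ _, le_max_right _ _⟩
  have hC₁s := hC₁ s hs
  have hC₂s := hC₂ (s + τ₁) (by linarith)
  have hC₂s₀ := hC₂ (s₀ + τ₁) (by linarith)
  refine ⟨C₁ s * (C₂ (s + τ₁) + 2 * C₂ (s₀ + τ₁)), by positivity, fun h hh => ?_⟩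
  set A := sobNorm h (s + τ₁ + τ₂)
  set B := sobNorm u (s + max τ₁ τ₂ + max μ₁ μ₂)
  set D := sobNorm h (s₀ + τ₁ + τ₂)
  calc sobNorm (Q₁ (Q₂ h)) s
      ≤ ENNReal.ofReal (C₁ s) * (sobNorm (Q₂ h) (s + τ₁) + B * sobNorm (Q₂ h) (s₀ + τ₁)) :=
        TameEstimate.le_of_le hQ₁ hs (hQmem₂ h hh) (by linarith) le_rfl
    _ ≤ ENNReal.ofReal (C₁ s) * (ENNReal.ofReal (C₂ (s + τ₁)) * (A + B * D) +
          B * (2 * ENNReal.ofReal (C₂ (s₀ + τ₁)) * D)) := by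
        gcongr
        · exact TameEstimate.le_of_le hQ₂ (by linarith) hh (by linarith) (by linarith)
        · refine TameEstimate.le_of_small hQ₂ (by linarith) hh ?_
          exact (sobNorm_mono u (by linarith)).trans husmall
    _ ≤ ENNReal.ofReal (C₁ s) *
          ((ENNReal.ofReal (C₂ (s + τ₁)) + 2 * ENNReal.ofReal (C₂ (s₀ + τ₁))) * (A + B * D)) := by
        gcongr
        exact mul_add_mul_mul_le_add_mul _ _ _ _ _
    _ = _ := by
        rw [ENNReal.ofReal_mul hC₁s.le, ENNReal.ofReal_add hC₂s.le (by positivity),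
          ENNReal.ofReal_mul zero_le_two, ENNReal.ofReal_ofNat, mul_assoc]

theorem stmt18 (n : ℕ) (hn : 1 ≤ n) (s₀ τ₁ τ₂ μ₁ μ₂ : ℝ)
    (hs₀ : 0 ≤ s₀) (hτ₁ : 0 ≤ τ₁) (hτ₂ : 0 ≤ τ₂) (hμ₁ : 0 ≤ μ₁) (hμ₂ : 0 ≤ μ₂)
    (u : (Fin n → ℤ) → ℂ) (hu : ∀ t : ℝ, 0 ≤ t → sobNorm u t < ⊤)
    (Q₁ Q₂ : ((Fin n → ℤ) → ℂ) →ₗ[ℂ] ((Fin n → ℤ) → ℂ))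
    (hQmem₁ : ∀ h : (Fin n → ℤ) → ℂ, (∀ t : ℝ, 0 ≤ t → sobNorm h t < ⊤) →
      ∀ t : ℝ, 0 ≤ t → sobNorm (Q₁ h) t < ⊤)
    (hQmem₂ : ∀ h : (Fin n → ℤ) → ℂ, (∀ t : ℝ, 0 ≤ t → sobNorm h t < ⊤) →
      ∀ t : ℝ, 0 ≤ t → sobNorm (Q₂ h) t < ⊤)
    (C₁ C₂ : ℝ → ℝ)
    (hC₁ : ∀ s, s₀ ≤ s → 0 < C₁ s) (hC₂ : ∀ s, s₀ ≤ s → 0 < C₂ s)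
    (hQ₁ : ∀ s, s₀ ≤ s → ∀ h : (Fin n → ℤ) → ℂ, (∀ t : ℝ, 0 ≤ t → sobNorm h t < ⊤) →
      sobNorm (Q₁ h) s ≤ ENNReal.ofReal (C₁ s) *
        (sobNorm h (s + τ₁) + sobNorm u (s + μ₁) * sobNorm h (s₀ + τ₁)))
    (hQ₂ : ∀ s, s₀ ≤ s → ∀ h : (Fin n → ℤ) → ℂ, (∀ t : ℝ, 0 ≤ t → sobNorm h t < ⊤) →
      sobNorm (Q₂ h) s ≤ ENNReal.ofReal (C₂ s) *
        (sobNorm h (s + τ₂) + sobNorm u (s + μ₂) * sobNorm h (s₀ + τ₂)))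
    (husmall : sobNorm u (s₀ + max τ₁ τ₂ + max μ₁ μ₂) ≤ 1) :
    ∀ s, s₀ ≤ s → ∃ C : ℝ, 0 < C ∧
      ∀ h : (Fin n → ℤ) → ℂ, (∀ t : ℝ, 0 ≤ t → sobNorm h t < ⊤) →
        sobNorm (Q₁ (Q₂ h)) s ≤ ENNReal.ofReal C *
          (sobNorm h (s + τ₁ + τ₂) +
            sobNorm u (s + max τ₁ τ₂ + max μ₁ μ₂) * sobNorm h (s₀ + τ₁ + τ₂)) :=
  stmt18_general n s₀ τ₁ τ₂ μ₁ μ₂ hτ₁ u Q₁ Q₂ hQmem₂ C₁ C₂ hC₁ hC₂ hQ₁ hQ₂ husmall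
end
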